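/- Let α > 0 and let t̂(α) ∈ (π, 2π) be the unique solution of 1 − e^{α t}(cos t − α sin t) = 0 in (π, 2π). Then t̂(α) → 2π as α → 0⁺, and consequently y₁(α) := e^{α t̂(α)} sin t̂(α) satisfies y₁(α) < 0 for all small α > 0 and y₁(α) → 0 as α → 0⁺. -/

import Mathlib

/-!
On `(π, 2π)` the equation `ψ₊(t) = 0` reads `cos t = α sin t + e^{-αt}`, and since
`sin t ≥ -1` and `e^{-αt} ≥ 1 - αt ≥ 1 - 2πα`, this forces `cos t̂(α) ≥ 1 - (2π + 1)α → 1`.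
On `[π, 2π]` the cosine is inverted by `t = 2π - arccos (cos t)`, so `t̂(α) → 2π` by continuity
of `arccos`, and then `y₁(α) → e⁰ sin 2π = 0`; negativity holds because `sin < 0` on `(π, 2π)`.
-/

open Real Filter Topology Set

noncomputable def psiPlus (α t : ℝ) : ℝ :=
  1 - exp (α * t) * (cos t - α * sin t)

lemma cos_eq_of_psiPlus_eq_zero {α t : ℝ} (h : psiPlus α t = 0) :
    cos t = α * sin t + exp (-(α * t)) := by
  have hprod : exp (α * t) * (cos t - α * sin t) = 1 := by
    unfold psiPlus at h
    linarith
  have hdiff : cos t - α * sin t = exp (-(α * t)) := by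
    rw [exp_neg]
    exact eq_inv_of_mul_eq_one_right hprod
  linarith

lemma one_sub_mul_le_cos_of_psiPlus_eq_zero {α t : ℝ} (hα : 0 ≤ α) (ht : t ≤ 2 * π)
    (h : psiPlus α t = 0) : 1 - (2 * π + 1) * α ≤ cos t := by
  have hsin : -α ≤ α * sin t := by nlinarith [neg_one_le_sin t]
  have hexp : 1 - α * t ≤ exp (-(α * t)) := by linarith [add_one_le_exp (-(α * t))]
  have hαt : α * t ≤ α * (2 * π) := mul_le_mul_of_nonneg_left ht hα
  rw [cos_eq_of_psiPlus_eq_zero h]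
  linarith

lemma sin_neg_of_pi_lt_of_lt_two_pi {x : ℝ} (h₁ : π < x) (h₂ : x < 2 * π) : sin x < 0 := by
  rw [← sin_sub_two_pi]
  exact sin_neg_of_neg_of_neg_pi_lt (by linarith) (by linarith)

lemma two_pi_sub_arccos_cos {t : ℝ} (h₁ : π ≤ t) (h₂ : t ≤ 2 * π) :
    2 * π - arccos (cos t) = t := by
  rw [← cos_two_pi_sub, arccos_cos (by linarith) (by linarith)]
  ring

lemma tendsto_two_pi_of_tendsto_cos {ι : Type*} {l : Filter ι} {f : ι → ℝ}
    (hf : ∀ᶠ i in l, f i ∈ Icc π (2 * π)) (hcos : Tendsto (fun i => cos (f i)) l (𝓝 1)) :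
    Tendsto f l (𝓝 (2 * π)) := by
  have hlim : Tendsto (fun i => 2 * π - arccos (cos (f i))) l (𝓝 (2 * π)) := by
    simpa [arccos_one] using tendsto_const_nhds.sub (continuous_arccos.tendsto 1 |>.comp hcos)
  refine hlim.congr' ?_
  filter_upwards [hf] with i hi using two_pi_sub_arccos_cos hi.1 hi.2

lemma tendsto_cos_of_psiPlus_eq_zero {th : ℝ → ℝ} (hth : ∀ α : ℝ, 0 < α → th α ≤ 2 * π ∧
      psiPlus α (th α) = 0) :
    Tendsto (fun α => cos (th α)) (𝓝[>] 0) (𝓝 1) := by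
  have hlower : Tendsto (fun α : ℝ => 1 - (2 * π + 1) * α) (𝓝[>] 0) (𝓝 1) := by
    have : Continuous (fun α : ℝ => 1 - (2 * π + 1) * α) := by fun_prop
    simpa using (this.tendsto 0).mono_left nhdsWithin_le_nhds
  refine tendsto_of_tendsto_of_tendsto_of_le_of_le' hlower tendsto_const_nhds ?_
    (Eventually.of_forall fun α => cos_le_one (th α))
  filter_upwards [self_mem_nhdsWithin] with α (hα : 0 < α)
  exact one_sub_mul_le_cos_of_psiPlus_eq_zero hα.le (hth α hα).1 (hth α hα).2

/-- Let `t̂(α) ∈ (π, 2π)` be the return time, i.e. the unique zero of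
`ψ₊(t) = 1 - e^{αt}(cos t - α sin t)` in `(π, 2π)`. Then `t̂(α) → 2π` as `α → 0⁺`, and
`y₁(α) = e^{α t̂(α)} sin t̂(α)` is negative for all small `α > 0` and tends to `0`
as `α → 0⁺`. -/
theorem stmt_18 (th : ℝ → ℝ)
    (hth : ∀ α : ℝ, 0 < α → th α ∈ Set.Ioo π (2 * π) ∧
      1 - Real.exp (α * th α) * (Real.cos (th α) - α * Real.sin (th α)) = 0) :
    Filter.Tendsto th (nhdsWithin 0 (Set.Ioi 0)) (nhds (2 * π)) ∧
    (∃ ε > 0, ∀ α : ℝ, 0 < α → α < ε → Real.exp (α * th α) * Real.sin (th α) < 0) ∧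
    Filter.Tendsto (fun α => Real.exp (α * th α) * Real.sin (th α))
      (nhdsWithin 0 (Set.Ioi 0)) (nhds 0) := by
  have hcos : Tendsto (fun α => cos (th α)) (𝓝[>] 0) (𝓝 1) :=
    tendsto_cos_of_psiPlus_eq_zero fun α hα => ⟨(hth α hα).1.2.le, (hth α hα).2⟩
  have hIcc : ∀ᶠ α in 𝓝[>] (0 : ℝ), th α ∈ Icc π (2 * π) := by
    filter_upwards [self_mem_nhdsWithin] with α (hα : 0 < α)
    exact Ioo_subset_Icc_self (hth α hα).1
  have hlim : Tendsto th (𝓝[>] 0) (𝓝 (2 * π)) := tendsto_two_pi_of_tendsto_cos hIcc hcos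
  refine ⟨hlim, ⟨1, one_pos, fun α hα _ => ?_⟩, ?_⟩
  · exact mul_neg_of_pos_of_neg (exp_pos _)
      (sin_neg_of_pi_lt_of_lt_two_pi (hth α hα).1.1 (hth α hα).1.2)
  · have hαth : Tendsto (fun α => α * th α) (𝓝[>] 0) (𝓝 (0 * (2 * π))) :=
      (tendsto_nhdsWithin_of_tendsto_nhds tendsto_id).mul hlim
    simpa using hαth.rexp.mul ((continuous_sin.tendsto _).comp hlim)
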